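/- Let β be a Salem number of degree 4 with conjugates β1 = β, β2 = β^{-1}, β3, β4 = β3^{-1}, where |β3| = 1 and β3 is not a root of unity. Then the module of relations R_β = {m ∈ Z^4 : β1^{m1}β2^{m2}β3^{m3}β4^{m4} = 1} equals the Z-span of (1,1,0,0) and (0,0,1,1); in particular it has rank 2. -/

import Mathlib

/-- `β` is a quartic Salem number with conjugates `β, β⁻¹, γ, γ⁻¹`, where `|γ| = 1`,
`γ` is non-real and not a root of unity. -/
def IsSalemQuartic (β : ℝ) (γ : ℂ) : Prop :=
  1 < β ∧ ‖γ‖ = 1 ∧ γ.im ≠ 0 ∧ (∀ n : ℕ, 0 < n → γ ^ n ≠ 1) ∧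
  ∃ p : Polynomial ℤ, p.Monic ∧ Irreducible p ∧ p.natDegree = 4 ∧
    (p.map (Int.castRingHom ℂ)).roots = {(β : ℂ), (β : ℂ)⁻¹, γ, γ⁻¹}

/-! Taking absolute values kills the unimodular factor `γ`, so a relation forces
`β ^ (m1 - m2) = 1`, hence `m1 = m2` since `β > 1`; what remains is `γ ^ (m3 - m4) = 1`,
which forces `m3 = m4` because `γ` is not a root of unity. -/

lemma zpow_ne_one_of_forall_pow_ne_one {α : Type*} [DivisionMonoid α] {a : α}
    (ha : ∀ n : ℕ, 0 < n → a ^ n ≠ 1) {k : ℤ} (hk : k ≠ 0) : a ^ k ≠ 1 := by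
  intro hak
  refine ha k.natAbs (Int.natAbs_pos.2 hk) ?_
  cases k <;> simp_all

lemma zpow_mul_inv_zpow {G₀ : Type*} [GroupWithZero G₀] {a : G₀} (ha : a ≠ 0) (m n : ℤ) :
    a ^ m * a⁻¹ ^ n = a ^ (m - n) := by
  rw [inv_zpow', ← zpow_add₀ ha, sub_eq_add_neg]

lemma zpow_mul_zpow_eq_one_iff {K : Type*} [NormedDivisionRing K] {b c : K}
    (hb : ‖b‖ ≠ 1) (hc : ‖c‖ = 1) (hc_root : ∀ n : ℕ, 0 < n → c ^ n ≠ 1) {m n : ℤ} :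
    b ^ m * c ^ n = 1 ↔ m = 0 ∧ n = 0 := by
  constructor
  · intro hbc
    have hm : m = 0 := by
      have hnorm := congrArg norm hbc
      rw [norm_mul, norm_zpow, norm_zpow, hc, one_zpow, mul_one, norm_one] at hnorm
      exact (zpow_eq_one_iff_right₀ (norm_nonneg b) hb).1 hnorm
    subst hm
    rw [zpow_zero, one_mul] at hbc
    refine ⟨rfl, ?_⟩
    by_contra hn
    exact zpow_ne_one_of_forall_pow_ne_one hc_root hn hbc
  · rintro ⟨rfl, rfl⟩
    simp

/-- The module of relations of a quartic Salem number is the `ℤ`-span of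
`(1,1,0,0)` and `(0,0,1,1)`. -/
theorem salem_quartic_relations (β : ℝ) (γ : ℂ) (h : IsSalemQuartic β γ) :
    ∀ m1 m2 m3 m4 : ℤ,
      (β : ℂ) ^ m1 * ((β : ℂ)⁻¹) ^ m2 * γ ^ m3 * (γ⁻¹) ^ m4 = 1 ↔
        ∃ s t : ℤ, m1 = s ∧ m2 = s ∧ m3 = t ∧ m4 = t := by
  obtain ⟨hβ, hγ, -, hγ_root, -⟩ := h
  intro m1 m2 m3 m4
  have hβ_norm : ‖(β : ℂ)‖ = β := by
    rw [Complex.norm_real, Real.norm_of_nonneg (zero_le_one.trans hβ.le)]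
  have hβ0 : (β : ℂ) ≠ 0 := Complex.ofReal_ne_zero.2 (zero_lt_one.trans hβ).ne'
  have hβ1 : ‖(β : ℂ)‖ ≠ 1 := hβ_norm.symm ▸ hβ.ne'
  have hγ0 : γ ≠ 0 := norm_ne_zero_iff.1 (hγ ▸ one_ne_zero)
  rw [mul_assoc, zpow_mul_inv_zpow hβ0, zpow_mul_inv_zpow hγ0,
    zpow_mul_zpow_eq_one_iff hβ1 hγ hγ_root]
  constructor
  · rintro ⟨h12, h34⟩
    exact ⟨m2, m4, by omega, rfl, by omega, rfl⟩
  · rintro ⟨s, t, rfl, rfl, rfl, rfl⟩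
    simp
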